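/- Let T, 𝒰 be as in the silting assumption, and let Q, R be silting objects of 𝒰. Then a silting object P of 𝒰 satisfies Hom(Q, P[>0]) = 0 and Hom(P, R[>0]) = 0 if and only if its silting heart ℋ_P is contained in Q[<0]^⊥ ∩ (R[>0]^⊥). -/

import Mathlib

open CategoryTheory CategoryTheory.Limits CategoryTheory.Pretriangulated

universe v u

variable {C : Type u} [Category.{v} C] [Preadditive C] [HasZeroObject C]
  [HasShift C ℤ] [∀ n : ℤ, (shiftFunctor C n).Additive] [Pretriangulated C]

/-- The shift `S⟦n⟧` of a class of objects (closed under isomorphism). -/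
def shiftSet (S : Set C) (n : ℤ) : Set C :=
  {X : C | ∃ Y ∈ S, Nonempty (X ≅ Y⟦n⟧)}

/-- A class of objects is thick if it contains the zero objects and is closed under
isomorphisms, shifts, cones of morphisms (two-out-of-three in triangles) and retracts
(direct summands). -/
def IsThick (S : Set C) : Prop :=
  (∀ X : C, Limits.IsZero X → X ∈ S) ∧
  (∀ X Y : C, (X ≅ Y) → X ∈ S → Y ∈ S) ∧
  (∀ X : C, ∀ n : ℤ, X ∈ S → X⟦n⟧ ∈ S) ∧
  (∀ T ∈ distTriang C, T.obj₁ ∈ S → T.obj₂ ∈ S → T.obj₃ ∈ S) ∧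
  (∀ X Y : C, ∀ r : X ⟶ Y, ∀ s : Y ⟶ X, s ≫ r = 𝟙 Y → X ∈ S → Y ∈ S)

/-- The thick subcategory generated by a class of objects. -/
def thickClosure (S : Set C) : Set C :=
  ⋂₀ {P : Set C | S ⊆ P ∧ IsThick P}

/-- `P` is a silting object of the thick subcategory `𝒰`:
`Hom(P, P[i]) = 0` for `i > 0` and `thick(P) = 𝒰`. -/
def IsSilting (𝒰 : Set C) (P : C) : Prop :=
  (∀ i : ℤ, 0 < i → ∀ f : P ⟶ P⟦i⟧, f = 0) ∧ thickClosure {P} = 𝒰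

/-- The aisle `P[<0]^⊥` of the silting t-structure associated with `P`. -/
def siltAisle (P : C) : Set C :=
  {X : C | ∀ i : ℤ, i < 0 → ∀ f : P⟦i⟧ ⟶ X, f = 0}

/-- The coaisle `P[≥0]^⊥` of the silting t-structure associated with `P`. -/
def siltCoaisle (P : C) : Set C :=
  {X : C | ∀ i : ℤ, 0 ≤ i → ∀ f : P⟦i⟧ ⟶ X, f = 0}

/-- `(U, V)` is a bounded t-structure on `C`. -/
def IsBoundedTStructure (U V : Set C) : Prop :=
  (∀ X ∈ U, ∀ Y ∈ V, ∀ f : X ⟶ Y, f = 0) ∧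
  (∀ X : C, ∃ (A B : C) (_ : A ∈ U) (_ : B ∈ V)
    (f : A ⟶ X) (g : X ⟶ B) (h : B ⟶ A⟦(1 : ℤ)⟧),
      Triangle.mk f g h ∈ distTriang C) ∧
  (V = {X : C | ∀ A ∈ U, ∀ f : A ⟶ X, f = 0}) ∧
  (U = {Y : C | ∀ B ∈ V, ∀ f : Y ⟶ B, f = 0}) ∧
  (∀ X ∈ U, X⟦(1 : ℤ)⟧ ∈ U) ∧
  (∀ X : C, ∃ i : ℤ, X ∈ shiftSet U i) ∧
  (∀ X : C, ∃ i : ℤ, X ∈ shiftSet V i)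

/-- The silting heart `ℋ_P = P[<0]^⊥ ∩ (P[≥0]^⊥)[1]` associated with a silting object `P`. -/
def siltHeart (P : C) : Set C :=
  siltAisle P ∩ shiftSet (siltCoaisle P) 1

/-!
Write `U[n]` for `shiftSet U n` and `ℋ = U ∩ V[1]` for the heart of a bounded t-structure
`(U, V)`. Truncating an object of `U[n] ∩ V[m]` at `n + 1` splits off a cone in `ℋ[n]`, so by
induction on `m - n` a functor `Hom(W, -)` vanishing on `ℋ[j]` for `n ≤ j < m` vanishes on
`U[n] ∩ V[m]`. With `U_P = P[<0]^⊥` and `V_P = P[≥0]^⊥`, `Q ≥ P` says `P ∈ U_Q` and `P ≥ R`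
says `R ∈ U_P = ⊥V_P`. As `P ∈ U_P ∩ V_P[m]` for some `m` and every object of `V_P` lies in some
`U_P[n] ∩ V_P`, these reduce to `Hom(Q[<0], ℋ_P[≥0]) = 0` and `Hom(R, ℋ_P[<0]) = 0`, which are
the two conditions on `ℋ_P`.
-/

section HomVanishing

variable {D : Type*} [Category D] [HasZeroMorphisms D]

lemma forall_hom_eq_zero_congr {X Y X' Y' : D} (e : (X ⟶ Y) ≃ (X' ⟶ Y')) :
    (∀ f : X ⟶ Y, f = 0) ↔ ∀ f : X' ⟶ Y', f = 0 := by
  rw [← subsingleton_iff_forall_eq, ← subsingleton_iff_forall_eq]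
  exact e.subsingleton_congr

lemma forall_hom_eq_zero_iff_of_iso {X Y X' Y' : D} (eX : X ≅ X') (eY : Y ≅ Y') :
    (∀ f : X ⟶ Y, f = 0) ↔ ∀ f : X' ⟶ Y', f = 0 :=
  forall_hom_eq_zero_congr (eX.homCongr eY)

variable [HasShift D ℤ]

lemma forall_shift_hom_shift_eq_zero_iff (X Y : D) {a b c : ℤ} (h : b + c = a) :
    (∀ f : X⟦a⟧ ⟶ Y⟦c⟧, f = 0) ↔ ∀ f : X⟦b⟧ ⟶ Y, f = 0 :=
  (forall_hom_eq_zero_iff_of_iso ((shiftFunctorAdd' D b c a h).app X) (Iso.refl _)).trans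
    (forall_hom_eq_zero_congr (shiftEquiv D c).fullyFaithfulFunctor.homEquiv.symm)

lemma forall_shift_hom_eq_zero_iff (X Y : D) {a b : ℤ} (h : a + b = 0) :
    (∀ f : X⟦a⟧ ⟶ Y, f = 0) ↔ ∀ f : X ⟶ Y⟦b⟧, f = 0 :=
  forall_hom_eq_zero_congr ((shiftEquiv' D a b h).toAdjunction.homEquiv X Y)

end HomVanishing

section ShiftSet

variable {D : Type*} [Category D] [HasShift D ℤ] {S S' : Set D} {X : D}

lemma mem_shiftSet_zero (hX : X ∈ S) : X ∈ shiftSet S 0 :=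
  ⟨X, hX, ⟨((shiftFunctorZero D ℤ).app X).symm⟩⟩

lemma shift_mem_shiftSet {n : ℤ} (hX : X ∈ shiftSet S n) {a n' : ℤ} (h : n + a = n') :
    X⟦a⟧ ∈ shiftSet S n' := by
  obtain ⟨Y, hY, ⟨e⟩⟩ := hX
  exact ⟨Y, hY, ⟨(shiftFunctor D a).mapIso e ≪≫ ((shiftFunctorAdd' D n a n' h).app Y).symm⟩⟩

lemma mem_shiftSet_of_iso {Y : D} {n : ℤ} (e : X ≅ Y) (hY : Y ∈ shiftSet S n) :
    X ∈ shiftSet S n := by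
  obtain ⟨Z, hZ, ⟨e'⟩⟩ := hY
  exact ⟨Z, hZ, ⟨e ≪≫ e'⟩⟩

lemma mem_shiftSet_inter {n m : ℤ} (hX : X ∈ shiftSet S n) (hX' : X ∈ shiftSet S' (n + m)) :
    X ∈ shiftSet (S ∩ shiftSet S' m) n := by
  obtain ⟨A, hA, ⟨e⟩⟩ := hX
  obtain ⟨B, hB, ⟨e'⟩⟩ := hX'
  exact ⟨A, ⟨hA, B, hB, ⟨(shiftFunctor D n).preimageIso
    (e.symm ≪≫ e' ≪≫ (shiftFunctorAdd' D m n (n + m) (add_comm m n)).app B)⟩⟩, ⟨e⟩⟩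

end ShiftSet

namespace IsBoundedTStructure

variable {U V : Set C}

lemma mem_left_of_iso (hT : IsBoundedTStructure U V) {X Y : C} (e : X ≅ Y) (hX : X ∈ U) :
    Y ∈ U := by
  rw [hT.2.2.2.1] at hX ⊢
  exact fun B hB => (forall_hom_eq_zero_iff_of_iso e (Iso.refl B)).1 (hX B hB)

lemma shift_mem_left (hT : IsBoundedTStructure U V) {X : C} (hX : X ∈ U) {d : ℤ} (hd : 0 ≤ d) :
    X⟦d⟧ ∈ U := by
  induction d, hd using Int.leInduction with
  | base => exact hT.mem_left_of_iso ((shiftFunctorZero C ℤ).app X).symm hX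
  | succ d _ ih =>
    exact hT.mem_left_of_iso ((shiftFunctorAdd' C d 1 (d + 1) rfl).app X).symm
      (hT.2.2.2.2.1 _ ih)

lemma hom_eq_zero (hT : IsBoundedTStructure U V) {X Y : C} {i j : ℤ} (hX : X ∈ shiftSet U i)
    (hY : Y ∈ shiftSet V j) (hji : j ≤ i) (f : X ⟶ Y) : f = 0 := by
  obtain ⟨A, hA, ⟨eA⟩⟩ := hX
  obtain ⟨B, hB, ⟨eB⟩⟩ := hY
  revert f
  rw [forall_hom_eq_zero_iff_of_iso eA eB,
    forall_shift_hom_shift_eq_zero_iff A B (sub_add_cancel i j)]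
  exact hT.1 _ (hT.shift_mem_left hA (sub_nonneg.2 hji)) B hB

lemma isZero_of_mem_shiftSet (hT : IsBoundedTStructure U V) {X : C} {n m : ℤ}
    (hX : X ∈ shiftSet U n) (hX' : X ∈ shiftSet V m) (hmn : m ≤ n) : IsZero X :=
  (IsZero.iff_id_eq_zero X).2 (hT.hom_eq_zero hX hX' hmn _)

lemma mem_shiftSet_left_iff (hT : IsBoundedTStructure U V) {X : C} {n : ℤ} :
    X ∈ shiftSet U n ↔ ∀ Z ∈ V, ∀ f : X ⟶ Z⟦n⟧, f = 0 := by
  refine ⟨fun hX Z hZ => hT.hom_eq_zero hX ⟨Z, hZ, ⟨Iso.refl _⟩⟩ le_rfl, fun h => ?_⟩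
  refine ⟨X⟦-n⟧, ?_, ⟨(shiftEquiv' C (-n) n (neg_add_cancel n)).unitIso.app X⟩⟩
  rw [hT.2.2.2.1]
  exact fun Z hZ => (forall_shift_hom_eq_zero_iff X Z (neg_add_cancel n)).2 (h Z hZ)

lemma mem_shiftSet_right_iff (hT : IsBoundedTStructure U V) {X : C} {m : ℤ} :
    X ∈ shiftSet V m ↔ ∀ W ∈ U, ∀ f : W⟦m⟧ ⟶ X, f = 0 := by
  refine ⟨fun hX W hW => hT.hom_eq_zero ⟨W, hW, ⟨Iso.refl _⟩⟩ hX le_rfl, fun h => ?_⟩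
  refine ⟨X⟦-m⟧, ?_, ⟨((shiftFunctorCompIsoId C (-m) m (neg_add_cancel m)).app X).symm⟩⟩
  rw [hT.2.2.1]
  exact fun W hW => (forall_shift_hom_eq_zero_iff W X (add_neg_cancel m)).1 (h W hW)

lemma exists_distTriang (hT : IsBoundedTStructure U V) (X : C) (n : ℤ) :
    ∃ T ∈ distTriang C, T.obj₁ ∈ shiftSet U n ∧ T.obj₃ ∈ shiftSet V n ∧ Nonempty (T.obj₂ ≅ X) := by
  obtain ⟨A, B, hA, hB, f, g, h, hT'⟩ := hT.2.1 (X⟦-n⟧)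
  exact ⟨_, Triangle.shift_distinguished _ hT' n, ⟨A, hA, ⟨Iso.refl _⟩⟩, ⟨B, hB, ⟨Iso.refl _⟩⟩,
    ⟨(shiftFunctorCompIsoId C (-n) n (neg_add_cancel n)).app X⟩⟩

lemma obj₃_mem_shiftSet_left (hT : IsBoundedTStructure U V) {T : Triangle C}
    (hT' : T ∈ distTriang C) {n i : ℤ} (h₁ : T.obj₁ ∈ shiftSet U i) (hi : n ≤ i + 1)
    (h₂ : T.obj₂ ∈ shiftSet U n) : T.obj₃ ∈ shiftSet U n := by
  refine hT.mem_shiftSet_left_iff.2 fun Z hZ φ => ?_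
  have hZ' : Z⟦n⟧ ∈ shiftSet V n := ⟨Z, hZ, ⟨Iso.refl _⟩⟩
  obtain ⟨g, rfl⟩ := Triangle.yoneda_exact₃ T hT' φ (hT.hom_eq_zero h₂ hZ' le_rfl _)
  rw [hT.hom_eq_zero (shift_mem_shiftSet h₁ rfl) hZ' hi g, comp_zero]

lemma obj₁_mem_shiftSet_right (hT : IsBoundedTStructure U V) {T : Triangle C}
    (hT' : T ∈ distTriang C) {m j : ℤ} (h₂ : T.obj₂ ∈ shiftSet V m)
    (h₃ : T.obj₃ ∈ shiftSet V j) (hj : j ≤ m + 1) : T.obj₁ ∈ shiftSet V m := by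
  refine hT.mem_shiftSet_right_iff.2 fun W hW φ => ?_
  have hW' : W⟦m⟧ ∈ shiftSet U m := ⟨W, hW, ⟨Iso.refl _⟩⟩
  obtain ⟨ψ, rfl⟩ := Triangle.coyoneda_exact₂ _ (inv_rot_of_distTriang T hT') φ
    (hT.hom_eq_zero hW' h₂ le_rfl _)
  rw [hT.hom_eq_zero hW' (shift_mem_shiftSet h₃ (sub_eq_add_neg j 1).symm) (by omega) ψ]
  exact zero_comp

lemma forall_hom_eq_zero_of_forall_heart (hT : IsBoundedTStructure U V) {W : C} {n m : ℤ}
    (hW : ∀ j, n ≤ j → j < m → ∀ H ∈ shiftSet (U ∩ shiftSet V 1) j, ∀ f : W ⟶ H, f = 0)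
    {X : C} (hXU : X ∈ shiftSet U n) (hXV : X ∈ shiftSet V m) : ∀ f : W ⟶ X, f = 0 := by
  obtain ⟨k, hk⟩ : ∃ k : ℕ, m ≤ n + k := ⟨(m - n).toNat, by omega⟩
  induction k generalizing n X with
  | zero => exact fun f => (hT.isZero_of_mem_shiftSet hXU hXV (by omega)).eq_of_tgt f 0
  | succ k ih =>
    rcases le_or_gt m n with hmn | hnm
    · exact fun f => (hT.isZero_of_mem_shiftSet hXU hXV hmn).eq_of_tgt f 0
    obtain ⟨T, hT', h₁, h₃, ⟨e⟩⟩ := hT.exists_distTriang X (n + 1)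
    rw [← forall_hom_eq_zero_iff_of_iso (Iso.refl W) e]
    have h₂U := mem_shiftSet_of_iso e hXU
    have h₃H : T.obj₃ ∈ shiftSet (U ∩ shiftSet V 1) n :=
      mem_shiftSet_inter (hT.obj₃_mem_shiftSet_left hT' h₁ (by omega) h₂U) h₃
    have h₁V : T.obj₁ ∈ shiftSet V m :=
      hT.obj₁_mem_shiftSet_right hT' (mem_shiftSet_of_iso e hXV) h₃ (by omega)
    intro f
    obtain ⟨u, rfl⟩ := Triangle.coyoneda_exact₂ T hT' f (hW n le_rfl hnm _ h₃H _)
    rw [ih (fun j hj hj' => hW j (by omega) hj') h₁ h₁V (by omega) u, zero_comp]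

end IsBoundedTStructure

lemma mem_siltAisle_iff {D : Type*} [Category D] [Preadditive D] [HasShift D ℤ] {P X : D} :
    X ∈ siltAisle P ↔ ∀ i : ℤ, 0 < i → ∀ f : P ⟶ X⟦i⟧, f = 0 :=
  ⟨fun h i hi => (forall_shift_hom_eq_zero_iff P X (neg_add_cancel i)).1 (h (-i) (by omega)),
    fun h i hi => (forall_shift_hom_eq_zero_iff P X (add_neg_cancel i)).2 (h (-i) (by omega))⟩

section Silting

variable {P Q R : C}

lemma self_mem_siltAisle (hTP : IsBoundedTStructure (siltAisle P) (siltCoaisle P)) :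
    P ∈ siltAisle P := by
  rw [hTP.2.2.2.1]
  exact fun B hB => (forall_hom_eq_zero_iff_of_iso ((shiftFunctorZero C ℤ).app P) (Iso.refl B)).1
    (hB 0 le_rfl)

lemma siltAisle_subset_of_mem (hTP : IsBoundedTStructure (siltAisle P) (siltCoaisle P))
    (hTQ : IsBoundedTStructure (siltAisle Q) (siltCoaisle Q)) (hPQ : P ∈ siltAisle Q) :
    siltAisle P ⊆ siltAisle Q := by
  intro X hX
  rw [hTQ.2.2.2.1]
  exact fun B hB => hTP.1 X hX B fun i hi => hTQ.1 _ (hTQ.shift_mem_left hPQ hi) B hB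

lemma mem_siltAisle_iff_siltHeart_subset (hTP : IsBoundedTStructure (siltAisle P) (siltCoaisle P))
    (hTQ : IsBoundedTStructure (siltAisle Q) (siltCoaisle Q)) :
    P ∈ siltAisle Q ↔ siltHeart P ⊆ siltAisle Q := by
  refine ⟨fun hPQ X hX => siltAisle_subset_of_mem hTP hTQ hPQ hX.1, fun h i hi => ?_⟩
  obtain ⟨m, hm⟩ := hTP.2.2.2.2.2.2 P
  refine hTP.forall_hom_eq_zero_of_forall_heart ?_ (mem_shiftSet_zero (self_mem_siltAisle hTP)) hm
  rintro j hj - H ⟨H₀, hH₀, ⟨e⟩⟩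
  rw [forall_hom_eq_zero_iff_of_iso (Iso.refl _) e,
    forall_shift_hom_shift_eq_zero_iff Q H₀ (sub_add_cancel i j)]
  exact h hH₀ (i - j) (by omega)

lemma mem_siltAisle_iff_forall_siltHeart (hTP : IsBoundedTStructure (siltAisle P) (siltCoaisle P)) :
    R ∈ siltAisle P ↔ ∀ X ∈ siltHeart P, ∀ i : ℤ, 0 < i → ∀ f : R⟦i⟧ ⟶ X, f = 0 := by
  refine ⟨fun hR X hX i hi => hTP.hom_eq_zero ⟨R, hR, ⟨Iso.refl _⟩⟩ hX.2 hi, fun h => ?_⟩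
  rw [hTP.2.2.2.1]
  intro Z hZ
  obtain ⟨n, hn⟩ := hTP.2.2.2.2.2.1 Z
  refine hTP.forall_hom_eq_zero_of_forall_heart ?_ hn (mem_shiftSet_zero hZ)
  rintro j - hj H ⟨H₀, hH₀, ⟨e⟩⟩
  rw [forall_hom_eq_zero_iff_of_iso (Iso.refl R) e,
    ← forall_shift_hom_eq_zero_iff R H₀ (neg_add_cancel j)]
  exact h H₀ hH₀ (-j) (by omega)

end Silting

theorem silting_between_iff_heart_subset_general (𝒰 : Set C)
    (hsilt : ∀ P : C, IsSilting 𝒰 P → IsBoundedTStructure (siltAisle P) (siltCoaisle P))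
    (Q R : C) (hQ : IsSilting 𝒰 Q) :
    ∀ P : C, IsSilting 𝒰 P →
      (((∀ i : ℤ, 0 < i → ∀ f : Q ⟶ P⟦i⟧, f = 0) ∧
        (∀ i : ℤ, 0 < i → ∀ f : P ⟶ R⟦i⟧, f = 0)) ↔
        siltHeart P ⊆
          {X : C | ∀ i : ℤ, i < 0 → ∀ f : Q⟦i⟧ ⟶ X, f = 0} ∩
          {X : C | ∀ i : ℤ, 0 < i → ∀ f : R⟦i⟧ ⟶ X, f = 0}) := by
  intro P hP
  have hTP := hsilt P hP
  rw [← mem_siltAisle_iff, ← mem_siltAisle_iff, Set.subset_inter_iff]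
  exact and_congr (mem_siltAisle_iff_siltHeart_subset hTP (hsilt Q hQ))
    (mem_siltAisle_iff_forall_siltHeart hTP)

/-- Let `𝒰` be a thick subcategory of a triangulated category `T` such that every silting
object of `𝒰` induces a bounded silting t-structure, and let `Q, R` be silting objects
of `𝒰`. A silting object `P` of `𝒰` satisfies `Hom(Q, P[>0]) = 0` and `Hom(P, R[>0]) = 0`
(that is, `Q ≥ P ≥ R`) if and only if its silting heart `ℋ_P` is contained in
`Q[<0]^⊥ ∩ R[>0]^⊥`. -/
theorem silting_between_iff_heart_subset (𝒰 : Set C) (h𝒰 : IsThick 𝒰)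
    (hsilt : ∀ P : C, IsSilting 𝒰 P → IsBoundedTStructure (siltAisle P) (siltCoaisle P))
    (Q R : C) (hQ : IsSilting 𝒰 Q) (hR : IsSilting 𝒰 R) :
    ∀ P : C, IsSilting 𝒰 P →
      (((∀ i : ℤ, 0 < i → ∀ f : Q ⟶ P⟦i⟧, f = 0) ∧
        (∀ i : ℤ, 0 < i → ∀ f : P ⟶ R⟦i⟧, f = 0)) ↔
        siltHeart P ⊆
          {X : C | ∀ i : ℤ, i < 0 → ∀ f : Q⟦i⟧ ⟶ X, f = 0} ∩
          {X : C | ∀ i : ℤ, 0 < i → ∀ f : R⟦i⟧ ⟶ X, f = 0}) :=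
  silting_between_iff_heart_subset_general 𝒰 hsilt Q R hQ
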